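/- arXiv:1301.5850 — 2 statements merged into one kernel-verified Lean document; each statement's English description precedes it below -/
import Mathlib

section
/- Let 3 ≤ m ≤ n < ω and 1 ≤ r < ω. Suppose f, g ∈ F(m,n,r), x ≠ y < m, and f(u,v) = g(u,v) for all u,v ∈ m \ {x,y} (i.e., f ≡_{x,y} g). Then there exists h ∈ F(m,n,r) with h ≡_x f and h ≡_y g (h agrees with f off x and with g off y). Consequently, cylindrifiers commute in C(m,n,r): c_x c_y X = c_y c_x X for all X ⊆ F(m,n,r). -/
/-- `Bin(n, J)` with ψ atoms per pair: `Id` together with the symbols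
`a^k(i, j)` for `k < ψ`, `i < n - 1`, `j ∈ J`. -/
inductive Bin (n ψ : ℕ) (J : Type*) where
  | id : Bin n ψ J
  | a (k : Fin ψ) (i : Fin (n - 1)) (j : J) : Bin n ψ J

/-- The forbidden triples. -/
def Forb {n ψ : ℕ} {J : Type*} [LinearOrder J] :
    Set (Bin n ψ J × Bin n ψ J × Bin n ψ J) :=
  {t | (∃ b c, b ≠ c ∧ t = (Bin.id, b, c)) ∨
       (∃ k k' k'' i j j', j' ≤ j ∧ t = (Bin.a k i j, Bin.a k' i j, Bin.a k'' i j'))}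

/-- `f` is an admissible edge-labelling on `m`, i.e. a member of `F(m, n, J)`. -/
def IsF {n ψ : ℕ} {J : Type*} [LinearOrder J] (m : ℕ)
    (f : Fin m → Fin m → Bin n ψ J) : Prop :=
  (∀ x, f x x = Bin.id) ∧ (∀ x y, f x y = f y x) ∧
  (∀ x y z, (f x y, f y z, f x z) ∉ Forb)

def kappa : ℕ → ℕ → ℕ
  | _, 0 => 0
  | x, y + 1 => 1 + x * kappa x y

def psi (n r : ℕ) : ℕ := kappa ((n - 1) * r) ((n - 1) * r) + 1

/-- The elements of `F(m, n, J)` as a subtype: the base of `C(m,n,J)` is its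
power set. -/
def FF (m n ψ : ℕ) (J : Type*) [LinearOrder J] :=
  {f : Fin m → Fin m → Bin n ψ J // IsF m f}

/-- `f ≡_x g`: `f` and `g` agree on all pairs not involving `x`. -/
def eqEx {n ψ m : ℕ} {J : Type*} [LinearOrder J] (x : Fin m)
    (f g : Fin m → Fin m → Bin n ψ J) : Prop :=
  ∀ u v, u ≠ x → v ≠ x → f u v = g u v

/-- The cylindrifier of `C(m, n, J)`. -/
def cyl {m n ψ : ℕ} {J : Type*} [LinearOrder J] (x : Fin m)
    (X : Set (FF m n ψ J)) : Set (FF m n ψ J) :=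
  {f | ∃ g ∈ X, eqEx x f.1 g.1}

/-!
The amalgam `h` agrees with `f` off `x` and with `g` off `y`, so only the label `e := h(x, y)` is
free, and it has to keep every triangle `(e, f(y, z), g(x, z))`, `z ∉ {x, y}`, out of `Forb`.
If some `f(y, z₀) = Id`, then `y` and `z₀` are indistinguishable in `f`, and `e := g(x, z₀)` turns
each of these triangles into the `g`-triangle on `x, z₀, z`; symmetrically if some
`g(x, z₀) = Id`. Otherwise all these labels are atoms; the `m - 2` labels `f(y, z)` use fewer
than `n - 1` indices, and an atom `e` with an unused index closes no forbidden triangle, since a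
forbidden triangle of atoms has a single index. Cylindrifiers commute because `c_x c_y` and
`c_y c_x` are both amalgamations of the same pair.
-/

variable {n ψ m : ℕ} {J : Type*}

def Bin.index : Bin n ψ J → Option (Fin (n - 1))
  | .id => none
  | .a _ i _ => some i

lemma exists_index_ne {x y : Fin m} (hmn : m ≤ n) (hxy : x ≠ y) (b : Fin m → Bin n ψ J) :
    ∃ i : Fin (n - 1), ∀ z, z ≠ x → z ≠ y → (b z).index ≠ some i := by
  set s := (Finset.univ.erase x).erase y
  have hcard : (s.image fun z => (b z).index).card <
      (Finset.univ.map Function.Embedding.some : Finset (Option (Fin (n - 1)))).card := by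
    have hs : s.card = m - 1 - 1 := by
      rw [Finset.card_erase_of_mem (by simpa using hxy.symm), Finset.card_erase_of_mem
        (Finset.mem_univ x), Finset.card_univ, Fintype.card_fin]
    have := Finset.card_image_le (s := s) (f := fun z => (b z).index)
    have := Fin.val_ne_of_ne hxy
    rw [Finset.card_map, Finset.card_univ, Fintype.card_fin]
    omega
  obtain ⟨_, hi, hiS⟩ := Finset.exists_mem_notMem_of_card_lt_card hcard
  obtain ⟨i, -, rfl⟩ := Finset.mem_map.1 hi
  refine ⟨i, fun z hzx hzy hz => hiS (Finset.mem_image.2 ⟨z, ?_, hz⟩)⟩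
  simp [s, hzx, hzy]

variable [LinearOrder J]

lemma Bin.eq_id_or_index_eq_of_mem_Forb {a b c : Bin n ψ J} (h : (a, b, c) ∈ Forb) :
    a = .id ∨ (a.index = b.index ∧ b.index = c.index) := by
  rcases h with ⟨_, _, _, h⟩ | ⟨_, _, _, _, _, _, _, h⟩ <;> simp only [Prod.mk.injEq] at h
  · exact .inl h.1
  · obtain ⟨rfl, rfl, rfl⟩ := h
    exact .inr ⟨rfl, rfl⟩

def IsSafeTriple (a b c : Bin n ψ J) : Prop :=
  (a, b, c) ∉ Forb ∧ (a, c, b) ∉ Forb ∧ (b, a, c) ∉ Forb ∧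
  (b, c, a) ∉ Forb ∧ (c, a, b) ∉ Forb ∧ (c, b, a) ∉ Forb

namespace IsSafeTriple

variable {a b c : Bin n ψ J}

lemma swap_right (h : IsSafeTriple a b c) : IsSafeTriple a c b :=
  let ⟨h₁, h₂, h₃, h₄, h₅, h₆⟩ := h
  ⟨h₂, h₁, h₅, h₆, h₃, h₄⟩

lemma reverse (h : IsSafeTriple a b c) : IsSafeTriple c b a :=
  let ⟨h₁, h₂, h₃, h₄, h₅, h₆⟩ := h
  ⟨h₆, h₅, h₄, h₃, h₂, h₁⟩

end IsSafeTriple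

lemma isSafeTriple_self_self_id (e : Bin n ψ J) : IsSafeTriple e e .id := by
  cases e <;> simp [IsSafeTriple, Forb]

lemma isSafeTriple_of_index_ne {a b c : Bin n ψ J} (ha : a ≠ .id) (hb : b ≠ .id)
    (hc : c ≠ .id) (hab : a.index ≠ b.index) : IsSafeTriple a b c := by
  refine ⟨?_, ?_, ?_, ?_, ?_, ?_⟩ <;> intro h <;>
    rcases Bin.eq_id_or_index_eq_of_mem_Forb h with h | ⟨h₁, h₂⟩ <;> simp_all

namespace IsF

variable {f : Fin m → Fin m → Bin n ψ J}

lemma isSafeTriple (hf : IsF m f) (u v w : Fin m) :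
    IsSafeTriple (f u v) (f v w) (f u w) := by
  obtain ⟨-, hsymm, htri⟩ := hf
  refine ⟨htri u v w, ?_, ?_, ?_, ?_, ?_⟩
  · simpa only [hsymm v u] using htri v u w
  · simpa only [hsymm w v, hsymm v u, hsymm w u] using htri w v u
  · simpa only [hsymm w u, hsymm v u] using htri v w u
  · simpa only [hsymm w u, hsymm w v] using htri w u v
  · simpa only [hsymm w v] using htri u w v

lemma eq_of_eq_id (hf : IsF m f) {u v : Fin m} (huv : f u v = .id) (w : Fin m) :
    f v w = f u w := by
  by_contra hne
  exact hf.2.2 u v w (.inl ⟨_, _, hne, by rw [huv]⟩)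

end IsF

lemma isSafeTriple_of_forall_ne_or_pair {h : Fin m → Fin m → Bin n ψ J}
    (hsymm : ∀ u v, h u v = h v u) {x y : Fin m} (hxy : x ≠ y)
    (hx : ∀ u v w, u ≠ x → v ≠ x → w ≠ x → IsSafeTriple (h u v) (h v w) (h u w))
    (hy : ∀ u v w, u ≠ y → v ≠ y → w ≠ y → IsSafeTriple (h u v) (h v w) (h u w))
    (hpair : ∀ z, IsSafeTriple (h x y) (h y z) (h x z)) (u v w : Fin m) :
    IsSafeTriple (h u v) (h v w) (h u w) := by
  have swap_left : ∀ {a b c}, IsSafeTriple (h a b) (h b c) (h a c) →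
      IsSafeTriple (h b a) (h a c) (h b c) := fun {a b _} hs => by
    rw [hsymm b a]
    exact hs.swap_right
  have swap_right : ∀ {a b c}, IsSafeTriple (h a b) (h b c) (h a c) →
      IsSafeTriple (h a c) (h c b) (h a b) := fun {_ b c} hs => by
    rw [hsymm c b]
    exact hs.reverse
  by_cases hX : u ≠ x ∧ v ≠ x ∧ w ≠ x
  · exact hx u v w hX.1 hX.2.1 hX.2.2
  by_cases hY : u ≠ y ∧ v ≠ y ∧ w ≠ y
  · exact hy u v w hY.1 hY.2.1 hY.2.2
  simp only [not_and_or, not_not] at hX hY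
  rcases hX with rfl | rfl | rfl <;> rcases hY with rfl | rfl | rfl
  all_goals first
    | exact absurd rfl hxy
    | exact hpair _
    | exact swap_right (hpair _)
    | exact swap_left (hpair _)
    | exact swap_left (swap_right (hpair _))
    | exact swap_right (swap_left (hpair _))
    | exact swap_right (swap_left (swap_right (hpair _)))

section Amalgam

variable {f g : Fin m → Fin m → Bin n ψ J} {x y : Fin m}

def amalgam (f g : Fin m → Fin m → Bin n ψ J) (x y : Fin m) (e : Bin n ψ J) :
    Fin m → Fin m → Bin n ψ J :=
  fun u v => if u = x ∧ v = y ∨ u = y ∧ v = x then e else if u = x ∨ v = x then g u v else f u v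

lemma eqEx_amalgam_left (e : Bin n ψ J) : eqEx x (amalgam f g x y e) f := by
  intro u v hu hv
  simp [amalgam, hu, hv]

lemma eqEx_amalgam_right
    (agr : ∀ u v, u ≠ x → u ≠ y → v ≠ x → v ≠ y → f u v = g u v) (e : Bin n ψ J) :
    eqEx y (amalgam f g x y e) g := by
  intro u v hu hv
  by_cases hx : u = x ∨ v = x
  · simp [amalgam, hu, hv, hx]
  · rw [not_or] at hx
    simp [amalgam, hu, hv, hx, agr u v hx.1 hu hx.2 hv]

lemma amalgam_comm (hf : IsF m f) (hg : IsF m g) (e : Bin n ψ J) (u v : Fin m) :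
    amalgam f g x y e u v = amalgam f g x y e v u := by
  simp only [amalgam, hf.2.1 u v, hg.2.1 u v]
  split_ifs <;> tauto

lemma isF_amalgam (hf : IsF m f) (hg : IsF m g) (hxy : x ≠ y)
    (agr : ∀ u v, u ≠ x → u ≠ y → v ≠ x → v ≠ y → f u v = g u v) {e : Bin n ψ J}
    (he : ∀ z, z ≠ x → z ≠ y → IsSafeTriple e (f y z) (g x z)) :
    IsF m (amalgam f g x y e) := by
  have hleft : eqEx x (amalgam f g x y e) f := eqEx_amalgam_left e
  have hright : eqEx y (amalgam f g x y e) g := eqEx_amalgam_right agr e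
  have hxe : amalgam f g x y e x y = e := by simp [amalgam]
  have hye : amalgam f g x y e y x = e := by simp [amalgam]
  have hdiag : ∀ u, amalgam f g x y e u u = .id := by
    intro u
    by_cases hu : u = y
    · rw [hu, hleft y y hxy.symm hxy.symm, hf.1]
    · rw [hright u u hu hu, hg.1]
  refine ⟨hdiag, amalgam_comm hf hg e, fun u v w =>
    (isSafeTriple_of_forall_ne_or_pair (amalgam_comm hf hg e) hxy ?_ ?_ ?_ u v w).1⟩
  · intro u v w hu hv hw
    rw [hleft u v hu hv, hleft v w hv hw, hleft u w hu hw]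
    exact hf.isSafeTriple u v w
  · intro u v w hu hv hw
    rw [hright u v hu hv, hright v w hv hw, hright u w hu hw]
    exact hg.isSafeTriple u v w
  · intro z
    rw [hxe]
    by_cases hzx : z = x
    · rw [hzx, hye, hdiag]
      exact isSafeTriple_self_self_id e
    by_cases hzy : z = y
    · rw [hzy, hdiag, hxe]
      exact (isSafeTriple_self_self_id e).swap_right
    rw [hleft y z hxy.symm hzx, hright x z hxy hzy]
    exact he z hzx hzy

end Amalgam

section SafeEdge

variable {f g : Fin m → Fin m → Bin n ψ J} {x y : Fin m}

lemma isSafeTriple_of_eq_id (hf : IsF m f) (hg : IsF m g)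
    (agr : ∀ u v, u ≠ x → u ≠ y → v ≠ x → v ≠ y → f u v = g u v)
    {z₀ : Fin m} (hz₀x : z₀ ≠ x) (hz₀y : z₀ ≠ y) (hz₀ : f y z₀ = .id)
    (z : Fin m) (hzx : z ≠ x) (hzy : z ≠ y) : IsSafeTriple (g x z₀) (f y z) (g x z) := by
  rw [← hf.eq_of_eq_id hz₀ z, agr z₀ z hz₀x hz₀y hzx hzy]
  exact hg.isSafeTriple x z₀ z

lemma exists_isSafeTriple [Nonempty J] (hψ : 0 < ψ) (hmn : m ≤ n)
    (hf : IsF m f) (hg : IsF m g) (hxy : x ≠ y)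
    (agr : ∀ u v, u ≠ x → u ≠ y → v ≠ x → v ≠ y → f u v = g u v) :
    ∃ e : Bin n ψ J, ∀ z, z ≠ x → z ≠ y → IsSafeTriple e (f y z) (g x z) := by
  by_cases hfy : ∃ z, z ≠ x ∧ z ≠ y ∧ f y z = .id
  · obtain ⟨z₀, hz₀x, hz₀y, hz₀⟩ := hfy
    exact ⟨g x z₀, isSafeTriple_of_eq_id hf hg agr hz₀x hz₀y hz₀⟩
  by_cases hgx : ∃ z, z ≠ x ∧ z ≠ y ∧ g x z = .id
  · obtain ⟨z₀, hz₀x, hz₀y, hz₀⟩ := hgx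
    have agr' : ∀ u v, u ≠ y → u ≠ x → v ≠ y → v ≠ x → g u v = f u v :=
      fun u v huy hux hvy hvx => (agr u v hux huy hvx hvy).symm
    exact ⟨f y z₀, fun z hzx hzy =>
      (isSafeTriple_of_eq_id hg hf agr' hz₀y hz₀x hz₀ z hzy hzx).swap_right⟩
  push Not at hfy hgx
  obtain ⟨i, hi⟩ := exists_index_ne hmn hxy (f y)
  exact ⟨.a ⟨0, hψ⟩ i (Classical.arbitrary J), fun z hzx hzy => isSafeTriple_of_index_ne
    nofun (hfy z hzx hzy) (hgx z hzx hzy) (hi z hzx hzy).symm⟩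

end SafeEdge

theorem exists_amalgam [Nonempty J] (hψ : 0 < ψ) (hmn : m ≤ n)
    {f g : Fin m → Fin m → Bin n ψ J} (hf : IsF m f) (hg : IsF m g) {x y : Fin m} (hxy : x ≠ y)
    (agr : ∀ u v, u ≠ x → u ≠ y → v ≠ x → v ≠ y → f u v = g u v) :
    ∃ h, IsF m h ∧ eqEx x h f ∧ eqEx y h g := by
  obtain ⟨e, he⟩ := exists_isSafeTriple hψ hmn hf hg hxy agr
  exact ⟨amalgam f g x y e, isF_amalgam hf hg hxy agr he, eqEx_amalgam_left e,
    eqEx_amalgam_right agr e⟩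

lemma cyl_cyl_subset [Nonempty J] (hψ : 0 < ψ) (hmn : m ≤ n) (X : Set (FF m n ψ J))
    {x y : Fin m} (hxy : x ≠ y) : cyl x (cyl y X) ⊆ cyl y (cyl x X) := by
  rintro f ⟨g, ⟨k, hk, hgk⟩, hfg⟩
  obtain ⟨h, hh, hhk, hhf⟩ := exists_amalgam hψ hmn k.2 f.2 hxy
    fun u v hux huy hvx hvy => (hgk u v huy hvy).symm.trans (hfg u v hux hvx).symm
  exact ⟨⟨h, hh⟩, ⟨k, hk, hhk⟩, fun u v hu hv => (hhf u v hu hv).symm⟩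

theorem cyl_comm [Nonempty J] (hψ : 0 < ψ) (hmn : m ≤ n) (X : Set (FF m n ψ J))
    (x y : Fin m) : cyl x (cyl y X) = cyl y (cyl x X) := by
  rcases eq_or_ne x y with rfl | hxy
  · rfl
  · exact (cyl_cyl_subset hψ hmn X hxy).antisymm (cyl_cyl_subset hψ hmn X hxy.symm)

theorem stmt_7_general (m n r : ℕ) (hmn : m ≤ n) (hr : 1 ≤ r) :
    (∀ f g : Fin m → Fin m → Bin n (psi n r) (Fin r), IsF m f → IsF m g →
      ∀ x y : Fin m, x ≠ y →
      (∀ u v : Fin m, u ≠ x → u ≠ y → v ≠ x → v ≠ y → f u v = g u v) →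
      ∃ h : Fin m → Fin m → Bin n (psi n r) (Fin r),
        IsF m h ∧ eqEx x h f ∧ eqEx y h g) ∧
    (∀ X : Set (FF m n (psi n r) (Fin r)), ∀ x y : Fin m,
      cyl x (cyl y X) = cyl y (cyl x X)) := by
  have : Nonempty (Fin r) := ⟨⟨0, hr⟩⟩
  have hψ : 0 < psi n r := Nat.succ_pos _
  exact ⟨fun f g hf hg x y hxy agr => exists_amalgam hψ hmn hf hg hxy agr,
    cyl_comm hψ hmn⟩

/-- Amalgamation in `F(m, n, r)` for `3 ≤ m ≤ n`, `1 ≤ r`, and the resulting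
commutativity of cylindrifiers in `C(m, n, r)`. -/
theorem stmt_7 (m n r : ℕ) (hm : 3 ≤ m) (hmn : m ≤ n) (hr : 1 ≤ r) :
    (∀ f g : Fin m → Fin m → Bin n (psi n r) (Fin r), IsF m f → IsF m g →
      ∀ x y : Fin m, x ≠ y →
      (∀ u v : Fin m, u ≠ x → u ≠ y → v ≠ x → v ≠ y → f u v = g u v) →
      ∃ h : Fin m → Fin m → Bin n (psi n r) (Fin r),
        IsF m h ∧ eqEx x h f ∧ eqEx y h g) ∧
    (∀ X : Set (FF m n (psi n r) (Fin r)), ∀ x y : Fin m,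
      cyl x (cyl y X) = cyl y (cyl x X)) :=
  stmt_7_general m n r hmn hr
end

section
/- Let A ∈ Sc_{m+1} (a substitution algebra of dimension m+1, m ≥ 2) and let x ∈ A satisfy s_{[k/l]}x · s_{[l/k]}x = x for all k, l < m. Then x · s_{[k/m]}x = x · s_{[l/m]}x for all k, l < m; consequently, setting b = x · Π_{i∈Γ} s_{[i/m]}x for any non-empty finite Γ ⊆ m, the value of b does not depend on the choice of Γ. -/
/-- A substitution algebra of dimension `α` (Pinter): a boolean algebra with
cylindrifiers `c i` and substitutions `s i j` (denoting `s_{[i/j]}`, the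
substitution replacing `i` by `j`), satisfying axioms (1)–(9). -/
structure Sc (α : Type*) (A : Type*) [BooleanAlgebra A] where
  c : α → A → A
  s : α → α → A → A
  c_bot : ∀ i, c i ⊥ = ⊥
  le_c : ∀ i x, x ≤ c i x
  c_inf_c : ∀ i x y, c i (x ⊓ c i y) = c i x ⊓ c i y
  c_c_comm : ∀ i j x, c i (c j x) = c j (c i x)
  s_id : ∀ i x, s i i x = x
  s_sup : ∀ i j x y, s i j (x ⊔ y) = s i j x ⊔ s i j y
  s_compl : ∀ i j x, s i j xᶜ = (s i j x)ᶜ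
  s_c_eq : ∀ i j x, s i j (c i x) = c i x
  c_s : ∀ i j x, i ≠ j → c i (s i j x) = s i j x
  s_c_comm : ∀ i j k x, k ≠ i → k ≠ j → s i j (c k x) = c k (s i j x)
  c_s_exch : ∀ i j x, c i (s j i x) = c j (s i j x)
  s_s_comm : ∀ i j k x, i ≠ j → i ≠ k → j ≠ k → s j i (s i k x) = s i k (s j i x)
  s_s_merge : ∀ l i j x, s l i (s j l x) = s l i (s j i x)

/-!
If `x ≤ s_{[l/k]}x`, then `s_{[k/m]}x ≤ s_{[k/m]}s_{[l/k]}x = s_{[l/m]}s_{[k/m]}x`, while the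
hypothesis `x = s_{[k/l]}x · s_{[l/k]}x` gives `s_{[l/m]}x = s_{[l/m]}s_{[k/m]}x · s_{[l/k]}x`;
together these yield `x · s_{[k/m]}x ≤ s_{[l/m]}x`, and the equality follows by symmetry.
Once all the `x · s_{[i/m]}x` agree, `x · Π_{i∈Γ} s_{[i/m]}x` collapses to any single one of them.
-/

theorem Finset.inf_inf_eq_of_forall_inf_eq {ι L : Type*} [SemilatticeInf L] [OrderTop L]
    {s : Finset ι} {f : ι → L} {x : L} {j : ι} (hj : j ∈ s)
    (h : ∀ i ∈ s, x ⊓ f i = x ⊓ f j) : x ⊓ s.inf f = x ⊓ f j :=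
  le_antisymm (inf_le_inf_left x (Finset.inf_le hj))
    (le_inf inf_le_left (Finset.le_inf fun i hi => (h i hi).ge.trans inf_le_right))

namespace Sc

variable {α A : Type*} [BooleanAlgebra A] (S : Sc α A)

lemma s_inf (i j : α) (x y : A) : S.s i j (x ⊓ y) = S.s i j x ⊓ S.s i j y := by
  rw [← compl_compl (x ⊓ y), compl_inf, S.s_compl, S.s_sup, S.s_compl, S.s_compl, compl_sup,
    compl_compl, compl_compl]

lemma s_mono (i j : α) {x y : A} (h : x ≤ y) : S.s i j x ≤ S.s i j y := by
  rw [← sup_eq_right.2 h, S.s_sup]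
  exact le_sup_left

lemma s_s_eq_of_ne {i j : α} (k : α) (x : A) (hij : i ≠ j) :
    S.s i k (S.s i j x) = S.s i j x := by
  rw [← S.c_s i j x hij, S.s_c_eq]

lemma s_s_comm_of_same_target {a b c : α} (hab : a ≠ b) (hac : a ≠ c) (hbc : b ≠ c) (x : A) :
    S.s a c (S.s b c x) = S.s b c (S.s a c x) :=
  calc S.s a c (S.s b c x)
      = S.s a c (S.s b a x) := (S.s_s_merge a c b x).symm
    _ = S.s b a (S.s a c x) := (S.s_s_comm a b c x hab hac hbc).symm
    _ = S.s b c (S.s b a (S.s a c x)) := (S.s_s_eq_of_ne c _ hab.symm).symm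
    _ = S.s b c (S.s a c (S.s b a x)) := by rw [S.s_s_comm a b c x hab hac hbc]
    _ = S.s b c (S.s a c (S.s b c x)) := by rw [S.s_s_merge a c b x]
    _ = S.s b c (S.s a b (S.s b c x)) := by rw [← S.s_s_merge b c a (S.s b c x)]
    _ = S.s b c (S.s b c (S.s a b x)) := by rw [S.s_s_comm b a c x hab.symm hbc hac]
    _ = S.s b c (S.s a b x) := S.s_s_eq_of_ne c _ hbc
    _ = S.s b c (S.s a c x) := S.s_s_merge b c a x

lemma inf_s_le_inf_s {k l n : α} (hkl : k ≠ l) (hkn : k ≠ n) (hln : l ≠ n) {x : A}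
    (hx : S.s k l x ⊓ S.s l k x = x) : x ⊓ S.s k n x ≤ x ⊓ S.s l n x := by
  have hx_le : x ≤ S.s l k x := hx.symm.trans_le inf_le_right
  have h_split : S.s l n x = S.s l n (S.s k n x) ⊓ S.s l k x := by
    conv_lhs => rw [← hx]
    rw [S.s_inf, S.s_s_merge l n k x, S.s_s_eq_of_ne n x hkl.symm]
  have h_lift : S.s k n x ≤ S.s l n (S.s k n x) :=
    calc S.s k n x ≤ S.s k n (S.s l k x) := S.s_mono k n hx_le
      _ = S.s k n (S.s l n x) := S.s_s_merge k n l x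
      _ = S.s l n (S.s k n x) := S.s_s_comm_of_same_target hkl hkn hln x
  rw [h_split]
  exact le_inf inf_le_left (le_inf (inf_le_right.trans h_lift) (inf_le_left.trans hx_le))

lemma inf_s_eq_inf_s {k l n : α} (hkn : k ≠ n) (hln : l ≠ n) {x : A}
    (hx : S.s k l x ⊓ S.s l k x = x) : x ⊓ S.s k n x = x ⊓ S.s l n x := by
  rcases eq_or_ne k l with rfl | hkl
  · rfl
  exact le_antisymm (S.inf_s_le_inf_s hkl hkn hln hx)
    (S.inf_s_le_inf_s hkl.symm hln hkn (inf_comm (S.s k l x) _ ▸ hx))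

end Sc

theorem stmt_17_general (m : ℕ) {A : Type*} [BooleanAlgebra A]
    (S : Sc (Fin (m + 1)) A) (x : A)
    (hx : ∀ k l : Fin (m + 1), k.val < m → l.val < m →
      S.s k l x ⊓ S.s l k x = x) :
    (∀ k l : Fin (m + 1), k.val < m → l.val < m →
      x ⊓ S.s k (Fin.last m) x = x ⊓ S.s l (Fin.last m) x) ∧
    (∀ Γ : Finset (Fin (m + 1)), Γ.Nonempty → (∀ i ∈ Γ, i.val < m) →
      x ⊓ Γ.inf (fun i => S.s i (Fin.last m) x)
        = x ⊓ S.s 0 (Fin.last m) x) := by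
  have h_eq : ∀ k l : Fin (m + 1), k.val < m → l.val < m →
      x ⊓ S.s k (Fin.last m) x = x ⊓ S.s l (Fin.last m) x := fun k l hk hl =>
    S.inf_s_eq_inf_s (Fin.ne_of_lt hk) (Fin.ne_of_lt hl) (hx k l hk hl)
  refine ⟨h_eq, fun Γ ⟨j, hj⟩ hΓ => ?_⟩
  have h0 : (0 : Fin (m + 1)).val < m := Nat.zero_lt_of_lt (hΓ j hj)
  rw [Finset.inf_inf_eq_of_forall_inf_eq hj fun i hi => h_eq i j (hΓ i hi) (hΓ j hj),
    h_eq j 0 (hΓ j hj) h0]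

/-- In `Sc_{m+1}` (`m ≥ 2`), if `s_{[k/l]}x ⊓ s_{[l/k]}x = x` for all `k,l < m`
then `x ⊓ s_{[k/m]}x = x ⊓ s_{[l/m]}x` for all `k,l < m`; consequently
`b = x ⊓ Π_{i∈Γ} s_{[i/m]}x` does not depend on the non-empty finite
`Γ ⊆ m`. -/
theorem stmt_17 (m : ℕ) (hm : 2 ≤ m) {A : Type*} [BooleanAlgebra A]
    (S : Sc (Fin (m + 1)) A) (x : A)
    (hx : ∀ k l : Fin (m + 1), k.val < m → l.val < m →
      S.s k l x ⊓ S.s l k x = x) :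
    (∀ k l : Fin (m + 1), k.val < m → l.val < m →
      x ⊓ S.s k (Fin.last m) x = x ⊓ S.s l (Fin.last m) x) ∧
    (∀ Γ : Finset (Fin (m + 1)), Γ.Nonempty → (∀ i ∈ Γ, i.val < m) →
      x ⊓ Γ.inf (fun i => S.s i (Fin.last m) x)
        = x ⊓ S.s 0 (Fin.last m) x) :=
  stmt_17_general m S x hx
end
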